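/- arXiv:cs/0511026 — 2 statements merged into one kernel-verified Lean document; each statement's English description precedes it below -/
import Mathlib

section
/- Let S be a metric space of states, A a nonempty finite action set, f : A → S → S, c : S → ℝ≥0 bounded by C, β ∈ [0,1), and let V be the unique fixed point of (T V)(s) = min_a [c(f a s) + β V(f a s)]. Let a*(s) achieve the minimum for each s, and define the stationary policy trajectory s_0 = s, s_{t+1} = f (a*(s_t)) s_t. Then the total discounted cost of this stationary policy equals V(s): ∑_{t=0}^∞ β^t c(s_{t+1}) = V(s_0), and V(s_0) ≤ ∑_{t=0}^∞ β^t c(s'_{t+1}) for any other action sequence (a_t) with s'_{t+1} = f a_t s'_t starting at s'_0 = s_0. -/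
lemma aux_tendsto_pow_mul (β : ℝ) (hβ0 : 0 ≤ β) (hβ1 : β < 1) (B : ℝ)
    (g : ℕ → ℝ) (hg : ∀ n, |g n| ≤ B) :
    Filter.Tendsto (fun n => β ^ n * g n) Filter.atTop (nhds 0) := by
  refine squeeze_zero_norm (a := fun n => B * β ^ n) (fun n => ?_) ?_
  · rw [norm_mul, Real.norm_eq_abs, Real.norm_eq_abs, abs_of_nonneg (pow_nonneg hβ0 n),
      mul_comm]
    exact mul_le_mul_of_nonneg_right (hg n) (pow_nonneg hβ0 n)
  · have := tendsto_pow_atTop_nhds_zero_of_lt_one hβ0 hβ1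
    simpa using this.const_mul B

/-- Optimality of the stationary policy obtained from the fixed point of the
Bellman equation: the trajectory generated by the pointwise minimizers `a*`
has discounted cost exactly `V s₀`, and `V s₀` lower-bounds the discounted
cost of every (possibly nonstationary) action sequence from `s₀`. -/
theorem stationary_policy_optimal (S : Type) [MetricSpace S]
    (A : Type) [Fintype A] [Nonempty A]
    (f : A → S → S) (c : S → NNReal) (C : NNReal) (hC : ∀ s, c s ≤ C)
    (β : ℝ) (hβ0 : 0 ≤ β) (hβ1 : β < 1)
    (V : S → ℝ) (hVbdd : ∃ B : ℝ, ∀ s, |V s| ≤ B)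
    (hV : ∀ s, V s =
      Finset.univ.inf' Finset.univ_nonempty
        (fun a : A => (c (f a s) : ℝ) + β * V (f a s)))
    (astar : S → A)
    (hastar : ∀ s, (c (f (astar s) s) : ℝ) + β * V (f (astar s) s) = V s)
    (s0 : S) (traj : ℕ → S)
    (htraj0 : traj 0 = s0)
    (htraj : ∀ t, traj (t + 1) = f (astar (traj t)) (traj t)) :
    HasSum (fun t : ℕ => β ^ t * (c (traj (t + 1)) : ℝ)) (V s0) ∧
    (∀ (a : ℕ → A) (traj' : ℕ → S), traj' 0 = s0 →
      (∀ t, traj' (t + 1) = f (a t) (traj' t)) →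
      ∀ L : ℝ, HasSum (fun t : ℕ => β ^ t * (c (traj' (t + 1)) : ℝ)) L →
        V s0 ≤ L) := by
  obtain ⟨B, hB⟩ := hVbdd
  constructor
  · -- equality part
    have hsummable : Summable (fun t : ℕ => β ^ t * (c (traj (t + 1)) : ℝ)) := by
      apply Summable.of_nonneg_of_le
        (fun t => mul_nonneg (pow_nonneg hβ0 t) (c (traj (t + 1))).coe_nonneg)
        (fun t => ?_) ((summable_geometric_of_lt_one hβ0 hβ1).mul_right (C : ℝ))
      exact mul_le_mul_of_nonneg_left (by exact_mod_cast hC _) (pow_nonneg hβ0 t)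
    rw [hsummable.hasSum_iff_tendsto_nat]
    have key : ∀ n, ∑ t ∈ Finset.range n, β ^ t * (c (traj (t + 1)) : ℝ)
        = V s0 - β ^ n * V (traj n) := by
      intro n
      induction n with
      | zero => simp [htraj0]
      | succ n ih =>
        rw [Finset.sum_range_succ, ih]
        have := hastar (traj n)
        rw [← htraj n] at this
        linear_combination (β ^ n) * this
    simp_rw [key]
    have h0 : Filter.Tendsto (fun n => β ^ n * V (traj n)) Filter.atTop (nhds 0) :=
      aux_tendsto_pow_mul β hβ0 hβ1 B _ (fun n => hB _)
    simpa using (tendsto_const_nhds (x := V s0)).sub h0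
  · intro a traj' h0' hstep L hL
    have key : ∀ n, V s0 ≤ (∑ t ∈ Finset.range n, β ^ t * (c (traj' (t + 1)) : ℝ))
        + β ^ n * V (traj' n) := by
      intro n
      induction n with
      | zero => simp [h0']
      | succ n ih =>
        refine ih.trans ?_
        rw [Finset.sum_range_succ]
        have hle : V (traj' n) ≤ (c (f (a n) (traj' n)) : ℝ) + β * V (f (a n) (traj' n)) := by
          rw [hV (traj' n)]
          exact Finset.inf'_le _ (Finset.mem_univ (a n))
        rw [← hstep n] at hle
        have h2 := mul_le_mul_of_nonneg_left hle (pow_nonneg hβ0 n)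
        have h3 : β ^ n * ((c (traj' (n + 1)) : ℝ) + β * V (traj' (n + 1)))
            = β ^ n * (c (traj' (n + 1)) : ℝ) + β ^ (n + 1) * V (traj' (n + 1)) := by ring
        linarith
    have h0 : Filter.Tendsto (fun n => β ^ n * V (traj' n)) Filter.atTop (nhds 0) :=
      aux_tendsto_pow_mul β hβ0 hβ1 B _ (fun n => hB _)
    have hsum := hL.tendsto_sum_nat
    have : Filter.Tendsto (fun n => (∑ t ∈ Finset.range n, β ^ t * (c (traj' (t + 1)) : ℝ))
        + β ^ n * V (traj' n)) Filter.atTop (nhds L) := by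
      simpa using hsum.add h0
    exact le_of_tendsto_of_tendsto' tendsto_const_nhds this key
end

section
/- Let Π be a set, A, B nonempty finite action sets, F : A → Π → Φ, G : B → Φ → Π, and c : Φ → ℝ≥0 bounded, β ∈ (0,1). Let V* be the unique fixed point of V = 𝒲(𝒲̂ V) where (𝒲 V̂)(π) = min_a [c(F a π) + β V̂(F a π)] and (𝒲̂ V)(φ) = min_b V(G b φ). Choose a*(π) and b*(φ) attaining these minima and define the stationary trajectory π_1 = π, φ_t = F (a*(π_t)) π_t, π_{t+1} = G (b*(φ_t)) φ_t. Then ∑_{t=1}^∞ β^{t-1} c(φ_t) = V*(π), and this value is ≤ the discounted cost of every other (possibly nonstationary) sequence of actions from π. -/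
/-- Theorem 7 in abstract form: let `V*` be the unique fixed point of the
composed operator `𝒲 ∘ 𝒲̂`, i.e.
`V π = min_a [c (F a π) + β · min_b V (G b (F a π))]`, and let `a*`, `b*` be
pointwise minimizers. Then the stationary trajectory they generate has
discounted cost exactly `V* π₀`, and this value lower-bounds the discounted
cost of every (possibly nonstationary) action sequence from `π₀`. -/
theorem stationary_design_optimal (PS Φ : Type) [Nonempty PS]
    (A B : Type) [Fintype A] [Nonempty A] [Fintype B] [Nonempty B]
    (F : A → PS → Φ) (G : B → Φ → PS)
    (c : Φ → NNReal) (C : NNReal) (hC : ∀ φ, c φ ≤ C)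
    (β : ℝ) (hβ0 : 0 < β) (hβ1 : β < 1)
    (V : PS → ℝ) (hVbdd : ∃ Bd : ℝ, ∀ π, |V π| ≤ Bd)
    (hV : ∀ π, V π =
      Finset.univ.inf' Finset.univ_nonempty
        (fun a : A => (c (F a π) : ℝ) +
          β * Finset.univ.inf' Finset.univ_nonempty
                (fun b : B => V (G b (F a π)))))
    (astar : PS → A) (bstar : Φ → B)
    (hastar : ∀ π,
      (c (F (astar π) π) : ℝ) +
        β * Finset.univ.inf' Finset.univ_nonempty
              (fun b : B => V (G b (F (astar π) π))) = V π)
    (hbstar : ∀ φ, V (G (bstar φ) φ) =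
      Finset.univ.inf' Finset.univ_nonempty (fun b : B => V (G b φ)))
    (π0 : PS) (πseq : ℕ → PS)
    (hπ0 : πseq 0 = π0)
    (hπseq : ∀ t, πseq (t + 1) =
      G (bstar (F (astar (πseq t)) (πseq t))) (F (astar (πseq t)) (πseq t))) :
    HasSum (fun t : ℕ => β ^ t * (c (F (astar (πseq t)) (πseq t)) : ℝ)) (V π0) ∧
    (∀ (a : ℕ → A) (b : ℕ → B) (π' : ℕ → PS), π' 0 = π0 →
      (∀ t, π' (t + 1) = G (b t) (F (a t) (π' t))) →
      ∀ L : ℝ, HasSum (fun t : ℕ => β ^ t * (c (F (a t) (π' t)) : ℝ)) L →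
        V π0 ≤ L) := by
  obtain ⟨Bd, hBd⟩ := hVbdd
  have hβ0' : (0:ℝ) ≤ β := le_of_lt hβ0
  -- tendsto of tail term
  have hzero : ∀ f : ℕ → PS, Filter.Tendsto (fun n => β ^ n * V (f n))
      Filter.atTop (nhds 0) := by
    intro f
    apply squeeze_zero_norm (a := fun n => β ^ n * Bd)
    · intro n
      rw [norm_mul, norm_pow, Real.norm_eq_abs, Real.norm_eq_abs,
        abs_of_nonneg hβ0']
      exact mul_le_mul_of_nonneg_left (hBd (f n)) (pow_nonneg hβ0' n)
    · have := tendsto_pow_atTop_nhds_zero_of_lt_one hβ0' hβ1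
      simpa using this.mul_const Bd
  constructor
  · -- stationary recursion
    have hstep : ∀ t, V (πseq t) =
        (c (F (astar (πseq t)) (πseq t)) : ℝ) + β * V (πseq (t+1)) := by
      intro t
      rw [hπseq t, hbstar (F (astar (πseq t)) (πseq t)), hastar (πseq t)]
    have hpartial : ∀ n, ∑ t ∈ Finset.range n,
        β ^ t * (c (F (astar (πseq t)) (πseq t)) : ℝ)
        = V π0 - β ^ n * V (πseq n) := by
      intro n
      induction n with
      | zero => simp [hπ0]
      | succ n ih =>
        have h : β ^ n * V (πseq n) =
            β ^ n * ((c (F (astar (πseq n)) (πseq n)) : ℝ) + β * V (πseq (n+1))) := by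
          rw [← hstep n]
        rw [Finset.sum_range_succ, ih, pow_succ]
        rw [h]; ring
    have hnn : ∀ t, 0 ≤ β ^ t * (c (F (astar (πseq t)) (πseq t)) : ℝ) :=
      fun t => mul_nonneg (pow_nonneg hβ0' t) (c _).coe_nonneg
    rw [hasSum_iff_tendsto_nat_of_nonneg hnn]
    have := (hzero πseq)
    have h2 := (tendsto_const_nhds (x := V π0) (f := Filter.atTop (α := ℕ))).sub this
    simp only [sub_zero] at h2
    refine h2.congr ?_
    intro n
    rw [hpartial n]
  · intro a b π' h0 hrec L hL
    have hineq : ∀ t, V (π' t) ≤ (c (F (a t) (π' t)) : ℝ) + β * V (π' (t+1)) := by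
      intro t
      have h2 : V (π' t) ≤ (c (F (a t) (π' t)) : ℝ) +
          β * Finset.univ.inf' Finset.univ_nonempty
            (fun b' : B => V (G b' (F (a t) (π' t)))) := by
        rw [hV (π' t)]
        exact Finset.inf'_le _ (Finset.mem_univ (a t))
      have h3 : Finset.univ.inf' Finset.univ_nonempty
          (fun b' : B => V (G b' (F (a t) (π' t)))) ≤ V (G (b t) (F (a t) (π' t))) :=
        Finset.inf'_le _ (Finset.mem_univ (b t))
      rw [hrec t]
      nlinarith [h2, h3]
    have hpart2 : ∀ n, V π0 ≤ (∑ t ∈ Finset.range n,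
        β ^ t * (c (F (a t) (π' t)) : ℝ)) + β ^ n * V (π' n) := by
      intro n
      induction n with
      | zero => simp [h0]
      | succ n ih =>
        have h' : β ^ n * V (π' n) ≤
            β ^ n * ((c (F (a n) (π' n)) : ℝ) + β * V (π' (n+1))) :=
          mul_le_mul_of_nonneg_left (hineq n) (pow_nonneg hβ0' n)
        rw [Finset.sum_range_succ]
        calc V π0 ≤ _ := ih
          _ ≤ _ := by rw [pow_succ]; nlinarith [h']
    have htend : Filter.Tendsto (fun n => (∑ t ∈ Finset.range n,
        β ^ t * (c (F (a t) (π' t)) : ℝ)) + β ^ n * V (π' n))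
        Filter.atTop (nhds (L + 0)) := hL.tendsto_sum_nat.add (hzero π')
    have := ge_of_tendsto htend (Filter.Eventually.of_forall hpart2)
    simpa using this
end
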